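/- arXiv:2504.00813 — 3 statements merged into one kernel-verified Lean document; each statement's English description precedes it below -/
import Mathlib

section
/- Proposition 1 (Safety / forward invariance). Suppose that (∂h_i/∂u)(x,u) = 0 for all (x,u) ∈ ℝ^n × ℝ^m and all i < r (relative degree r). Let α, γ > 0 and let ξ : [0,∞) → ℝ^n and υ : [0,∞) → ℝ^m be differentiable functions such that for all t ≥ 0: ξ'(t) = f(ξ(t),υ(t)), ⟨∇b(υ(t)), υ'(t)⟩ + α·b(υ(t)) ≥ 0, and (∂h_r/∂x)(ξ(t),υ(t))·f(ξ(t),υ(t)) + (∂h_r/∂u)(ξ(t),υ(t))·υ'(t) + γ·h_r(ξ(t),υ(t)) ≥ 0. If (ξ(0),υ(0)) ∈ ⋂_{i=0}^{r} X_i, then (ξ(t),υ(t)) ∈ ⋂_{i=0}^{r} X_i for all t ≥ 0. -/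
open Set Filter Topology
open scoped RealInnerProductSpace

noncomputable def hseq {n m : ℕ}
    (f : EuclideanSpace ℝ (Fin n) × EuclideanSpace ℝ (Fin m) → EuclideanSpace ℝ (Fin n))
    (h : EuclideanSpace ℝ (Fin n) → ℝ) (β : ℝ) :
    ℕ → EuclideanSpace ℝ (Fin n) × EuclideanSpace ℝ (Fin m) → ℝ
  | 0 => fun p => h p.1
  | i + 1 => fun p =>
      fderiv ℝ (fun x => hseq f h β i (x, p.2)) p.1 (f p) + β * hseq f h β i p

noncomputable def Xset {n m : ℕ}
    (f : EuclideanSpace ℝ (Fin n) × EuclideanSpace ℝ (Fin m) → EuclideanSpace ℝ (Fin n))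
    (h : EuclideanSpace ℝ (Fin n) → ℝ) (b : EuclideanSpace ℝ (Fin m) → ℝ) (β : ℝ) (i : ℕ) :
    Set (EuclideanSpace ℝ (Fin n) × EuclideanSpace ℝ (Fin m)) :=
  {p | 0 ≤ h p.1 ∧ 0 ≤ b p.2 ∧ 0 ≤ hseq f h β i p}

/-!
Each constraint is a scalar function `F` of time with `F' + c F ≥ 0` and `F(0) ≥ 0`, hence
`F ≥ 0` for all `t ≥ 0` (comparison with `e^{-ct}`). This applies directly to `b ∘ υ` and to
`h_r` along the trajectory. Below the relative degree the `u`-derivative of `h_i` vanishes, so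
`d/dt h_i = h_{i+1} - β h_i`, and nonnegativity propagates downwards from `h_r` to `h_0 = h`.
-/

theorem nonneg_of_hasDerivWithinAt_ge_neg_mul {F F' : ℝ → ℝ} {a c : ℝ}
    (hF : ∀ t ∈ Ici a, HasDerivWithinAt F (F' t) (Ici a) t)
    (hF' : ∀ t ∈ Ici a, -(c * F t) ≤ F' t) (ha : 0 ≤ F a) :
    ∀ t ∈ Ici a, 0 ≤ F t := by
  set G : ℝ → ℝ := fun t => Real.exp (c * t) * F t
  have hG : ∀ t ∈ Ici a,
      HasDerivWithinAt G (Real.exp (c * t) * (c * F t + F' t)) (Ici a) t := by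
    intro t ht
    have hexp : HasDerivWithinAt (fun t => Real.exp (c * t)) (Real.exp (c * t) * c) (Ici a) t :=
      ((hasDerivAt_id t).const_mul c).exp.hasDerivWithinAt.congr_deriv (by simp)
    exact (hexp.mul (hF t ht)).congr_deriv (by ring)
  have hG_mono : MonotoneOn G (Ici a) := by
    refine monotoneOn_of_hasDerivWithinAt_nonneg (convex_Ici a)
      (fun t ht => (hG t ht).continuousWithinAt)
      (fun t ht => (hG t (interior_subset ht)).mono
        (by rw [interior_Ici]; exact Ioi_subset_Ici_self))
      (fun t ht => mul_nonneg (Real.exp_pos _).le (by linarith [hF' t (interior_subset ht)]))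
  intro t ht
  have hGt : G a ≤ G t := hG_mono self_mem_Ici ht ht
  exact nonneg_of_mul_nonneg_right (le_trans (by positivity) hGt) (Real.exp_pos _)

theorem nonneg_of_hasDerivWithinAt_cascade {g : ℕ → ℝ → ℝ} {r : ℕ} {a β : ℝ}
    (hg : ∀ i < r, ∀ t ∈ Ici a, HasDerivWithinAt (g i) (g (i + 1) t - β * g i t) (Ici a) t)
    (hr : ∀ t ∈ Ici a, 0 ≤ g r t) (ha : ∀ i ≤ r, 0 ≤ g i a) :
    ∀ i ≤ r, ∀ t ∈ Ici a, 0 ≤ g i t := by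
  intro i hi
  induction hi using Nat.decreasingInduction with
  | self => exact hr
  | of_succ k hk ih =>
    exact nonneg_of_hasDerivWithinAt_ge_neg_mul (hg k hk) (fun t ht => by linarith [ih t ht])
      (ha k hk.le)

section Partials

variable {E F G : Type*} [NormedAddCommGroup E] [NormedSpace ℝ E]
  [NormedAddCommGroup F] [NormedSpace ℝ F] [NormedAddCommGroup G] [NormedSpace ℝ G]
  {H : E × F → G} {p : E × F}

theorem DifferentiableAt.fderiv_apply_eq_add_partials (hH : DifferentiableAt ℝ H p) (v : E)
    (w : F) :
    fderiv ℝ H p (v, w)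
      = fderiv ℝ (fun x => H (x, p.2)) p.1 v + fderiv ℝ (fun u => H (p.1, u)) p.2 w := by
  have hx : HasFDerivAt (fun x => H (x, p.2)) _ p.1 :=
    hH.hasFDerivAt.comp p.1 (hasFDerivAt_prodMk_left p.1 p.2)
  have hu : HasFDerivAt (fun u => H (p.1, u)) _ p.2 :=
    hH.hasFDerivAt.comp p.2 (hasFDerivAt_prodMk_right p.1 p.2)
  rw [hx.fderiv, hu.fderiv, ← Prod.fst_add_snd (v, w), map_add]
  simp

theorem DifferentiableAt.hasDerivWithinAt_comp_prodMk {x : ℝ → E} {y : ℝ → F} {x' : E} {y' : F}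
    {s : Set ℝ} {t : ℝ} (hH : DifferentiableAt ℝ H (x t, y t))
    (hx : HasDerivWithinAt x x' s t) (hy : HasDerivWithinAt y y' s t) :
    HasDerivWithinAt (fun t => H (x t, y t))
      (fderiv ℝ (fun a => H (a, y t)) (x t) x' + fderiv ℝ (fun b => H (x t, b)) (y t) y') s t := by
  rw [← hH.fderiv_apply_eq_add_partials]
  exact hH.hasFDerivAt.comp_hasDerivWithinAt t (hx.prodMk hy)

end Partials

section Hseq

variable {n m : ℕ}
  {f : EuclideanSpace ℝ (Fin n) × EuclideanSpace ℝ (Fin m) → EuclideanSpace ℝ (Fin n)}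
  {h : EuclideanSpace ℝ (Fin n) → ℝ} {β : ℝ}

theorem contDiff_hseq {N : ℕ} (hf : ContDiff ℝ N f) (hh : ContDiff ℝ (N + 1 : ℕ) h) :
    ∀ {i k : ℕ}, i + k ≤ N + 1 → ContDiff ℝ k (hseq f h β i)
  | 0, k, hk => (hh.of_le (by exact_mod_cast (by omega : k ≤ N + 1))).comp contDiff_fst
  | i + 1, k, hk => by
    have hi : ContDiff ℝ (k + 1 : ℕ) (hseq f h β i) := contDiff_hseq hf hh (by omega)
    have hpartial : ContDiff ℝ k fun p : EuclideanSpace ℝ (Fin n) × EuclideanSpace ℝ (Fin m) =>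
        fderiv ℝ (fun x => hseq f h β i (x, p.2)) p.1 :=
      ContDiff.fderiv (hi.comp (contDiff_snd.prodMk (contDiff_snd.comp contDiff_fst)))
        contDiff_fst (by norm_cast)
    exact (hpartial.clm_apply (hf.of_le (by exact_mod_cast (by omega : k ≤ N)))).add
      (contDiff_const.mul (hi.of_le (by exact_mod_cast (by omega : k ≤ k + 1))))

theorem hasDerivWithinAt_hseq_of_fderiv_snd_eq_zero {i : ℕ} {x : ℝ → EuclideanSpace ℝ (Fin n)}
    {y : ℝ → EuclideanSpace ℝ (Fin m)} {y' : EuclideanSpace ℝ (Fin m)} {s : Set ℝ} {t : ℝ}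
    (hd : DifferentiableAt ℝ (hseq f h β i) (x t, y t))
    (hu : fderiv ℝ (fun u => hseq f h β i (x t, u)) (y t) = 0)
    (hx : HasDerivWithinAt x (f (x t, y t)) s t) (hy : HasDerivWithinAt y y' s t) :
    HasDerivWithinAt (fun t => hseq f h β i (x t, y t))
      (hseq f h β (i + 1) (x t, y t) - β * hseq f h β i (x t, y t)) s t := by
  refine (hd.hasDerivWithinAt_comp_prodMk hx hy).congr_deriv ?_
  rw [hu, zero_apply, hseq]
  ring

end Hseq

theorem safety_general
    {n m r : ℕ}
    (f : EuclideanSpace ℝ (Fin n) × EuclideanSpace ℝ (Fin m) → EuclideanSpace ℝ (Fin n))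
    (h : EuclideanSpace ℝ (Fin n) → ℝ) (b : EuclideanSpace ℝ (Fin m) → ℝ)
    (hf : ContDiff ℝ (r + 1 : ℕ) f) (hh : ContDiff ℝ (r + 2 : ℕ) h) (hb : ContDiff ℝ 2 b)
    (β : ℝ)
    (hrel : ∀ (p : EuclideanSpace ℝ (Fin n) × EuclideanSpace ℝ (Fin m)), ∀ i < r,
      fderiv ℝ (fun u => hseq f h β i (p.1, u)) p.2 = 0)
    (α γ : ℝ)
    (ξ : ℝ → EuclideanSpace ℝ (Fin n)) (υ : ℝ → EuclideanSpace ℝ (Fin m))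
    (hode : ∀ t ∈ Ici (0 : ℝ), ∃ v : EuclideanSpace ℝ (Fin m),
      HasDerivWithinAt ξ (f (ξ t, υ t)) (Ici 0) t ∧
      HasDerivWithinAt υ v (Ici 0) t ∧
      0 ≤ ⟪gradient b (υ t), v⟫ + α * b (υ t) ∧
      0 ≤ fderiv ℝ (fun x => hseq f h β r (x, υ t)) (ξ t) (f (ξ t, υ t))
        + fderiv ℝ (fun u => hseq f h β r (ξ t, u)) (υ t) v + γ * hseq f h β r (ξ t, υ t))
    (h0 : (ξ 0, υ 0) ∈ ⋂ i ∈ Finset.range (r + 1), Xset f h b β i) :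
    ∀ t ∈ Ici (0 : ℝ), (ξ t, υ t) ∈ ⋂ i ∈ Finset.range (r + 1), Xset f h b β i := by
  choose! v hξ hυ hb_ineq hr_ineq using hode
  simp only [mem_iInter, Finset.mem_range, Xset, mem_ofPred_eq] at h0 ⊢
  have hdiff : ∀ i ≤ r, Differentiable ℝ (hseq f h β i) := fun i hi =>
    (contDiff_hseq hf hh (by omega : i + 1 ≤ r + 1 + 1)).differentiable one_ne_zero
  have hb_nonneg : ∀ t ∈ Ici (0 : ℝ), 0 ≤ b (υ t) :=
    nonneg_of_hasDerivWithinAt_ge_neg_mul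
      (fun t ht => ((hb.differentiable two_ne_zero) (υ t)).hasFDerivAt.comp_hasDerivWithinAt t
        (hυ t ht))
      (fun t ht => by linarith [hb_ineq t ht, inner_gradient_left (f := b) (x := υ t) (y := v t)])
      (h0 0 r.succ_pos).2.1
  have hr_nonneg : ∀ t ∈ Ici (0 : ℝ), 0 ≤ hseq f h β r (ξ t, υ t) :=
    nonneg_of_hasDerivWithinAt_ge_neg_mul
      (fun t ht => (hdiff r le_rfl _).hasDerivWithinAt_comp_prodMk (hξ t ht) (hυ t ht))
      (fun t ht => by linarith [hr_ineq t ht]) (h0 r r.lt_succ_self).2.2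
  have hseq_nonneg := nonneg_of_hasDerivWithinAt_cascade (g := fun i t => hseq f h β i (ξ t, υ t))
    (fun i hi t ht => hasDerivWithinAt_hseq_of_fderiv_snd_eq_zero (hdiff i hi.le _)
      (hrel (ξ t, υ t) i hi) (hξ t ht) (hυ t ht))
    hr_nonneg (fun i hi => (h0 i (by omega)).2.2)
  intro t ht i hi
  exact ⟨hseq_nonneg 0 r.zero_le t ht, hb_nonneg t ht, hseq_nonneg i (by omega) t ht⟩

/-- Proposition 1 (Safety / forward invariance). Under the relative-degree assumption, any
solution of the plant whose control input satisfies the two CBF inequalities, starting in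
`⋂_{i=0}^r X_i`, stays in `⋂_{i=0}^r X_i` for all `t ≥ 0`. -/
theorem safety
    {n m r : ℕ} (hn : 0 < n) (hm : 0 < m) (hr : 0 < r)
    (f : EuclideanSpace ℝ (Fin n) × EuclideanSpace ℝ (Fin m) → EuclideanSpace ℝ (Fin n))
    (h : EuclideanSpace ℝ (Fin n) → ℝ) (b : EuclideanSpace ℝ (Fin m) → ℝ)
    (hf : ContDiff ℝ (r + 1 : ℕ) f) (hh : ContDiff ℝ (r + 2 : ℕ) h) (hb : ContDiff ℝ 2 b)
    (β : ℝ) (hβ : 0 < β)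
    (hrel : ∀ (p : EuclideanSpace ℝ (Fin n) × EuclideanSpace ℝ (Fin m)), ∀ i < r,
      fderiv ℝ (fun u => hseq f h β i (p.1, u)) p.2 = 0)
    (α γ : ℝ) (hα : 0 < α) (hγ : 0 < γ)
    (ξ : ℝ → EuclideanSpace ℝ (Fin n)) (υ : ℝ → EuclideanSpace ℝ (Fin m))
    (hode : ∀ t ∈ Ici (0 : ℝ), ∃ v : EuclideanSpace ℝ (Fin m),
      HasDerivWithinAt ξ (f (ξ t, υ t)) (Ici 0) t ∧
      HasDerivWithinAt υ v (Ici 0) t ∧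
      0 ≤ ⟪gradient b (υ t), v⟫ + α * b (υ t) ∧
      0 ≤ fderiv ℝ (fun x => hseq f h β r (x, υ t)) (ξ t) (f (ξ t, υ t))
        + fderiv ℝ (fun u => hseq f h β r (ξ t, u)) (υ t) v + γ * hseq f h β r (ξ t, υ t))
    (h0 : (ξ 0, υ 0) ∈ ⋂ i ∈ Finset.range (r + 1), Xset f h b β i) :
    ∀ t ∈ Ici (0 : ℝ), (ξ t, υ t) ∈ ⋂ i ∈ Finset.range (r + 1), Xset f h b β i :=
  safety_general f h b hf hh hb β hrel α γ ξ υ hode h0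
end

section
/- Dissipation inequality from the KKT conditions of the controller QP (equation (16) in the proof of Theorem 1). Fix parameters ε, α, γ > 0. Let (x,u) ∈ ℝ^n × ℝ^m, q ∈ ℝ^m and λ_b ≥ 0, λ_h ≥ 0 satisfy: q + ε·((∂w/∂u)(u))^T ∇Φ(x) = λ_b·∇b(u) + λ_h·((∂h_r/∂u)(x,u))^T; λ_b·(⟨∇b(u), q⟩ + α·b(u)) = 0; λ_h·((∂h_r/∂u)(x,u)·q + (∂h_r/∂x)(x,u)·f(x,u) + γ·h_r(x,u)) = 0. If moreover b(u) ≥ 0 and (∂h_r/∂x)(x,u)·f(x,u) + γ·h_r(x,u) ≥ 0, then ⟨∇Φ(x), (∂w/∂u)(u)·q⟩ ≤ −(1/ε)·‖q‖². -/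
open Set Filter Topology
open scoped RealInnerProductSpace

/-! Pair the stationarity condition with `q`: this gives
`‖q‖² + ε ⟪∇Φ(x), (∂w/∂u)(u) q⟫ = λ_b ⟪∇b(u), q⟫ + λ_h (∂h_r/∂u)(x,u) q`.
Complementary slackness turns each term on the right into `-λ` times a nonnegative quantity
(`α b(u)`, resp. `(∂h_r/∂x)(x,u) f(x,u) + γ h_r(x,u)`), so the right-hand side is `≤ 0`. -/

lemma mul_nonpos_of_mul_add_eq_zero {l a s : ℝ} (hl : 0 ≤ l) (hs : 0 ≤ s)
    (h : l * (a + s) = 0) : l * a ≤ 0 := by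
  nlinarith [mul_nonneg hl hs]

lemma inner_le_neg_norm_sq_div_of_stationary {E : Type*} [NormedAddCommGroup E]
    [InnerProductSpace ℝ E] {q v c₁ c₂ : E} {ε l₁ l₂ : ℝ} (hε : 0 < ε)
    (hstat : q + ε • v = l₁ • c₁ + l₂ • c₂)
    (h₁ : l₁ * ⟪c₁, q⟫ ≤ 0) (h₂ : l₂ * ⟪c₂, q⟫ ≤ 0) :
    ⟪v, q⟫ ≤ -(1 / ε) * ‖q‖ ^ 2 := by
  have hpair : ‖q‖ ^ 2 + ε * ⟪v, q⟫ = l₁ * ⟪c₁, q⟫ + l₂ * ⟪c₂, q⟫ := by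
    simpa only [inner_add_left, real_inner_smul_left, real_inner_self_eq_norm_sq]
      using congrArg (⟪·, q⟫) hstat
  rw [show -(1 / ε) * ‖q‖ ^ 2 = -‖q‖ ^ 2 / ε by ring, le_div_iff₀ hε]
  linarith

theorem dissipation_inequality_general
    {n m r : ℕ}
    (f : EuclideanSpace ℝ (Fin n) × EuclideanSpace ℝ (Fin m) → EuclideanSpace ℝ (Fin n))
    (h : EuclideanSpace ℝ (Fin n) → ℝ) (b : EuclideanSpace ℝ (Fin m) → ℝ)
    (β : ℝ)
    (Φ : EuclideanSpace ℝ (Fin n) → ℝ) (w : EuclideanSpace ℝ (Fin m) → EuclideanSpace ℝ (Fin n))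
    (ε α γ : ℝ) (hε : 0 < ε) (hα : 0 < α)
    (x : EuclideanSpace ℝ (Fin n)) (u : EuclideanSpace ℝ (Fin m))
    (q : EuclideanSpace ℝ (Fin m)) (lb lh : ℝ) (hlb : 0 ≤ lb) (hlh : 0 ≤ lh)
    (hstat : q + ε • (ContinuousLinearMap.adjoint (fderiv ℝ w u)) (gradient Φ x)
      = lb • gradient b u + lh • gradient (fun u' => hseq f h β r (x, u')) u)
    (hcsb : lb * (⟪gradient b u, q⟫ + α * b u) = 0)
    (hcsh : lh * (fderiv ℝ (fun u' => hseq f h β r (x, u')) u q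
      + fderiv ℝ (fun x' => hseq f h β r (x', u)) x (f (x, u)) + γ * hseq f h β r (x, u)) = 0)
    (hbu : 0 ≤ b u)
    (hhr : 0 ≤ fderiv ℝ (fun x' => hseq f h β r (x', u)) x (f (x, u)) + γ * hseq f h β r (x, u)) :
    ⟪gradient Φ x, fderiv ℝ w u q⟫ ≤ -(1 / ε) * ‖q‖ ^ 2 := by
  have hb : lb * ⟪gradient b u, q⟫ ≤ 0 :=
    mul_nonpos_of_mul_add_eq_zero hlb (mul_nonneg hα.le hbu) hcsb
  have hh : lh * ⟪gradient (fun u' => hseq f h β r (x, u')) u, q⟫ ≤ 0 := by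
    rw [inner_gradient_left]
    exact mul_nonpos_of_mul_add_eq_zero hlh hhr (by rwa [← add_assoc])
  rw [← ContinuousLinearMap.adjoint_inner_left]
  exact inner_le_neg_norm_sq_div_of_stationary hε hstat hb hh

/-- Dissipation inequality from the KKT conditions of the controller QP (equation (16) in the
proof of Theorem 1): if `(q, λ_b, λ_h)` satisfy the KKT stationarity and complementarity
conditions of the controller QP at `(x,u)`, `b(u) ≥ 0` and
`(∂h_r/∂x)(x,u)·f(x,u) + γ·h_r(x,u) ≥ 0`, then
`⟨∇Φ(x), (∂w/∂u)(u)·q⟩ ≤ −(1/ε)·‖q‖²`. -/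
theorem dissipation_inequality
    {n m r : ℕ} (hn : 0 < n) (hm : 0 < m) (hr : 0 < r)
    (f : EuclideanSpace ℝ (Fin n) × EuclideanSpace ℝ (Fin m) → EuclideanSpace ℝ (Fin n))
    (h : EuclideanSpace ℝ (Fin n) → ℝ) (b : EuclideanSpace ℝ (Fin m) → ℝ)
    (hf : ContDiff ℝ (r + 1 : ℕ) f) (hh : ContDiff ℝ (r + 2 : ℕ) h) (hb : ContDiff ℝ 2 b)
    (β : ℝ) (hβ : 0 < β)
    (Φ : EuclideanSpace ℝ (Fin n) → ℝ) (w : EuclideanSpace ℝ (Fin m) → EuclideanSpace ℝ (Fin n))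
    (hΦ : ContDiff ℝ 2 Φ) (hw : ContDiff ℝ 2 w)
    (ε α γ : ℝ) (hε : 0 < ε) (hα : 0 < α) (hγ : 0 < γ)
    (x : EuclideanSpace ℝ (Fin n)) (u : EuclideanSpace ℝ (Fin m))
    (q : EuclideanSpace ℝ (Fin m)) (lb lh : ℝ) (hlb : 0 ≤ lb) (hlh : 0 ≤ lh)
    (hstat : q + ε • (ContinuousLinearMap.adjoint (fderiv ℝ w u)) (gradient Φ x)
      = lb • gradient b u + lh • gradient (fun u' => hseq f h β r (x, u')) u)
    (hcsb : lb * (⟪gradient b u, q⟫ + α * b u) = 0)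
    (hcsh : lh * (fderiv ℝ (fun u' => hseq f h β r (x, u')) u q
      + fderiv ℝ (fun x' => hseq f h β r (x', u)) x (f (x, u)) + γ * hseq f h β r (x, u)) = 0)
    (hbu : 0 ≤ b u)
    (hhr : 0 ≤ fderiv ℝ (fun x' => hseq f h β r (x', u)) x (f (x, u)) + γ * hseq f h β r (x, u)) :
    ⟪gradient Φ x, fderiv ℝ w u q⟫ ≤ -(1 / ε) * ‖q‖ ^ 2 :=
  dissipation_inequality_general f h b β Φ w ε α γ hε hα x u q lb lh hlb hlh hstat hcsb hcsh hbu hhr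
end

section
/- Pointwise Lyapunov decrease estimate (combining equations (14)–(16) in the proof of Theorem 1). Fix parameters ε, α, γ > 0 and constants d₃, d₄ > 0, L ≥ 0. Let (x,u) ∈ ℝ^n × ℝ^m, q ∈ ℝ^m and λ_b ≥ 0, λ_h ≥ 0 satisfy: q + ε·((∂w/∂u)(u))^T ∇Φ(x) = λ_b·∇b(u) + λ_h·((∂h_r/∂u)(x,u))^T; λ_b·(⟨∇b(u), q⟩ + α·b(u)) = 0; λ_h·((∂h_r/∂u)(x,u)·q + (∂h_r/∂x)(x,u)·f(x,u) + γ·h_r(x,u)) = 0; b(u) ≥ 0; and (∂h_r/∂x)(x,u)·f(x,u) + γ·h_r(x,u) ≥ 0. Suppose also that ‖((∂w/∂u)(u))^T·(∇Φ(w(u)) − ∇Φ(x))‖ ≤ L·‖x − w(u)‖, and that W : ℝ^n × ℝ^m → ℝ is continuously differentiable with (∂W/∂x)(x,u)·f(x,u) ≤ −d₃·‖x − w(u)‖² and ‖(∂W/∂u)(x,u)‖ ≤ d₄·‖x − w(u)‖. Then ⟨∇Φ(w(u)), (∂w/∂u)(u)·q⟩ + (∂W/∂x)(x,u)·f(x,u)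 + (∂W/∂u)(x,u)·q ≤ −(1/ε)·‖q‖² + (L + d₄)·‖q‖·‖x − w(u)‖ − d₃·‖x − w(u)‖². Moreover, if ε < 4·d₃/(L + d₄)², then the right-hand side is ≤ 0, and it equals 0 only if q = 0 and x = w(u). -/
open Set Filter Topology
open scoped RealInnerProductSpace

/-!
Take the inner product of the stationarity condition with `q`. Complementary slackness, together
with feasibility of the constraints, makes both multiplier terms nonpositive, so
`ε ⟪(∂w/∂u)ᵀ ∇Φ(x), q⟫ ≤ -‖q‖²`. Writing `∇Φ(w u) = (∇Φ(w u) - ∇Φ(x)) + ∇Φ(x)` and bounding the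
first part and `∂W/∂u` by Cauchy–Schwarz gives the estimate, whose right-hand side is a quadratic
form in `(‖q‖, ‖x - w u‖)`; it is negative definite when `ε (L + d₄)² < 4 d₃`.
-/

lemma mul_nonpos_of_complementary_slackness {μ t c : ℝ} (hμ : 0 ≤ μ) (hslack : μ * (t + c) = 0)
    (hc : 0 ≤ c) : μ * t ≤ 0 := by
  nlinarith [mul_nonneg hμ hc]

section InnerProductSpace

variable {F : Type*} [NormedAddCommGroup F] [InnerProductSpace ℝ F]

lemma inner_le_of_stationary {q v g₁ g₂ : F} {ε μ₁ μ₂ : ℝ} (hε : 0 < ε)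
    (hstat : q + ε • v = μ₁ • g₁ + μ₂ • g₂)
    (h₁ : μ₁ * ⟪g₁, q⟫ ≤ 0) (h₂ : μ₂ * ⟪g₂, q⟫ ≤ 0) :
    ⟪v, q⟫ ≤ -(1 / ε) * ‖q‖ ^ 2 := by
  have hq : ‖q‖ ^ 2 + ε * ⟪v, q⟫ = μ₁ * ⟪g₁, q⟫ + μ₂ * ⟪g₂, q⟫ := by
    simpa only [inner_add_left, real_inner_smul_left, real_inner_self_eq_norm_sq]
      using congrArg (⟪·, q⟫) hstat
  rw [neg_mul, one_div_mul_eq_div, le_neg, div_le_iff₀ hε]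
  linarith

variable {E : Type*} [NormedAddCommGroup E] [InnerProductSpace ℝ E]
  [CompleteSpace E] [CompleteSpace F]

lemma inner_apply_le_of_adjoint_bounds (T : F →L[ℝ] E) {a a' : E} {q : F} {ε K : ℝ}
    (hdescent : ⟪T.adjoint a', q⟫ ≤ -(1 / ε) * ‖q‖ ^ 2) (hdiff : ‖T.adjoint (a - a')‖ ≤ K) :
    ⟪a, T q⟫ ≤ -(1 / ε) * ‖q‖ ^ 2 + K * ‖q‖ := by
  have hsplit : ⟪a, T q⟫ = ⟪T.adjoint (a - a'), q⟫ + ⟪T.adjoint a', q⟫ := by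
    rw [← inner_add_left, ← map_add, sub_add_cancel, ContinuousLinearMap.adjoint_inner_left]
  have hcs : ⟪T.adjoint (a - a'), q⟫ ≤ K * ‖q‖ :=
    (real_inner_le_norm _ _).trans (mul_le_mul_of_nonneg_right hdiff (norm_nonneg q))
  linarith

end InnerProductSpace

section QuadraticForm

variable {ε C d : ℝ}

lemma mul_quadratic_form_eq (a s : ℝ) (hε : ε ≠ 0) :
    ε * (-(1 / ε) * a ^ 2 + C * a * s - d * s ^ 2)
      = -(a - ε * C * s / 2) ^ 2 - ε / 4 * (4 * d - ε * C ^ 2) * s ^ 2 := by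
  field_simp
  ring

lemma quadratic_form_nonpos (hε : 0 < ε) (hdisc : ε * C ^ 2 < 4 * d) (a s : ℝ) :
    -(1 / ε) * a ^ 2 + C * a * s - d * s ^ 2 ≤ 0 := by
  have h := mul_quadratic_form_eq (C := C) (d := d) a s hε.ne'
  have : 0 ≤ ε / 4 * (4 * d - ε * C ^ 2) * s ^ 2 := by
    have := sub_pos.2 hdisc
    positivity
  nlinarith [sq_nonneg (a - ε * C * s / 2)]

lemma eq_zero_of_quadratic_form_eq_zero (hε : 0 < ε) (hdisc : ε * C ^ 2 < 4 * d) {a s : ℝ}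
    (h0 : -(1 / ε) * a ^ 2 + C * a * s - d * s ^ 2 = 0) : a = 0 ∧ s = 0 := by
  have h := mul_quadratic_form_eq (C := C) (d := d) a s hε.ne'
  rw [h0, mul_zero] at h
  have hcoef : 0 < ε / 4 * (4 * d - ε * C ^ 2) := by
    have := sub_pos.2 hdisc
    positivity
  have hs : s = 0 := by
    by_contra hs
    nlinarith [sq_nonneg (a - ε * C * s / 2), mul_pos hcoef (pow_two_pos_of_ne_zero hs)]
  subst hs
  exact ⟨by simpa using h, rfl⟩

lemma mul_sq_lt_of_lt_div_sq {D : ℝ} (hε : 0 < ε) (h : ε < D / C ^ 2) : ε * C ^ 2 < D := by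
  rcases (sq_nonneg C).eq_or_lt with hC | hC
  · rw [← hC, div_zero] at h
    exact absurd h hε.not_gt
  · exact (lt_div_iff₀ hC).1 h

end QuadraticForm

theorem lyapunov_decrease_estimate_general
    {n m r : ℕ}
    (f : EuclideanSpace ℝ (Fin n) × EuclideanSpace ℝ (Fin m) → EuclideanSpace ℝ (Fin n))
    (h : EuclideanSpace ℝ (Fin n) → ℝ) (b : EuclideanSpace ℝ (Fin m) → ℝ)
    (β : ℝ)
    (Φ : EuclideanSpace ℝ (Fin n) → ℝ) (w : EuclideanSpace ℝ (Fin m) → EuclideanSpace ℝ (Fin n))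
    (ε α γ : ℝ) (hε : 0 < ε) (hα : 0 < α)
    (d₃ d₄ L : ℝ)
    (x : EuclideanSpace ℝ (Fin n)) (u : EuclideanSpace ℝ (Fin m))
    (q : EuclideanSpace ℝ (Fin m)) (lb lh : ℝ) (hlb : 0 ≤ lb) (hlh : 0 ≤ lh)
    (hstat : q + ε • (ContinuousLinearMap.adjoint (fderiv ℝ w u)) (gradient Φ x)
      = lb • gradient b u + lh • gradient (fun u' => hseq f h β r (x, u')) u)
    (hcsb : lb * (⟪gradient b u, q⟫ + α * b u) = 0)
    (hcsh : lh * (fderiv ℝ (fun u' => hseq f h β r (x, u')) u q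
      + fderiv ℝ (fun x' => hseq f h β r (x', u)) x (f (x, u)) + γ * hseq f h β r (x, u)) = 0)
    (hbu : 0 ≤ b u)
    (hhr : 0 ≤ fderiv ℝ (fun x' => hseq f h β r (x', u)) x (f (x, u)) + γ * hseq f h β r (x, u))
    (hLip : ‖(ContinuousLinearMap.adjoint (fderiv ℝ w u)) (gradient Φ (w u) - gradient Φ x)‖
      ≤ L * ‖x - w u‖)
    (W : EuclideanSpace ℝ (Fin n) × EuclideanSpace ℝ (Fin m) → ℝ)
    (hWx : fderiv ℝ (fun x' => W (x', u)) x (f (x, u)) ≤ -d₃ * ‖x - w u‖ ^ 2)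
    (hWu : ‖fderiv ℝ (fun u' => W (x, u')) u‖ ≤ d₄ * ‖x - w u‖) :
    ⟪gradient Φ (w u), fderiv ℝ w u q⟫
      + fderiv ℝ (fun x' => W (x', u)) x (f (x, u))
      + fderiv ℝ (fun u' => W (x, u')) u q
      ≤ -(1 / ε) * ‖q‖ ^ 2 + (L + d₄) * ‖q‖ * ‖x - w u‖ - d₃ * ‖x - w u‖ ^ 2 ∧
    (ε < 4 * d₃ / (L + d₄) ^ 2 →
      -(1 / ε) * ‖q‖ ^ 2 + (L + d₄) * ‖q‖ * ‖x - w u‖ - d₃ * ‖x - w u‖ ^ 2 ≤ 0 ∧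
      (-(1 / ε) * ‖q‖ ^ 2 + (L + d₄) * ‖q‖ * ‖x - w u‖ - d₃ * ‖x - w u‖ ^ 2 = 0 →
        q = 0 ∧ x = w u)) := by
  have hbq : lb * ⟪gradient b u, q⟫ ≤ 0 :=
    mul_nonpos_of_complementary_slackness hlb hcsb (mul_nonneg hα.le hbu)
  have hhq : lh * ⟪gradient (fun u' => hseq f h β r (x, u')) u, q⟫ ≤ 0 := by
    rw [inner_gradient_left]
    exact mul_nonpos_of_complementary_slackness hlh (by rw [← hcsh]; ring) hhr
  have hdescent := inner_apply_le_of_adjoint_bounds (fderiv ℝ w u)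
    (inner_le_of_stationary hε hstat hbq hhq) hLip
  have hWq := (Real.le_norm_self _).trans
    ((fderiv ℝ (fun u' => W (x, u')) u).le_of_opNorm_le hWu q)
  refine ⟨by linarith, fun hεlt => ?_⟩
  have hdisc := mul_sq_lt_of_lt_div_sq hε hεlt
  refine ⟨quadratic_form_nonpos hε hdisc _ _, fun h0 => ?_⟩
  obtain ⟨hq, hx⟩ := eq_zero_of_quadratic_form_eq_zero hε hdisc h0
  exact ⟨norm_eq_zero.1 hq, sub_eq_zero.1 (norm_eq_zero.1 hx)⟩

/-- Pointwise Lyapunov decrease estimate (combining equations (14)–(16) in the proof of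
Theorem 1). -/
theorem lyapunov_decrease_estimate
    {n m r : ℕ} (hn : 0 < n) (hm : 0 < m) (hr : 0 < r)
    (f : EuclideanSpace ℝ (Fin n) × EuclideanSpace ℝ (Fin m) → EuclideanSpace ℝ (Fin n))
    (h : EuclideanSpace ℝ (Fin n) → ℝ) (b : EuclideanSpace ℝ (Fin m) → ℝ)
    (hf : ContDiff ℝ (r + 1 : ℕ) f) (hh : ContDiff ℝ (r + 2 : ℕ) h) (hb : ContDiff ℝ 2 b)
    (β : ℝ) (hβ : 0 < β)
    (Φ : EuclideanSpace ℝ (Fin n) → ℝ) (w : EuclideanSpace ℝ (Fin m) → EuclideanSpace ℝ (Fin n))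
    (hΦ : ContDiff ℝ 2 Φ) (hw : ContDiff ℝ 2 w)
    (ε α γ : ℝ) (hε : 0 < ε) (hα : 0 < α) (hγ : 0 < γ)
    (d₃ d₄ L : ℝ) (hd₃ : 0 < d₃) (hd₄ : 0 < d₄) (hL : 0 ≤ L)
    (x : EuclideanSpace ℝ (Fin n)) (u : EuclideanSpace ℝ (Fin m))
    (q : EuclideanSpace ℝ (Fin m)) (lb lh : ℝ) (hlb : 0 ≤ lb) (hlh : 0 ≤ lh)
    (hstat : q + ε • (ContinuousLinearMap.adjoint (fderiv ℝ w u)) (gradient Φ x)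
      = lb • gradient b u + lh • gradient (fun u' => hseq f h β r (x, u')) u)
    (hcsb : lb * (⟪gradient b u, q⟫ + α * b u) = 0)
    (hcsh : lh * (fderiv ℝ (fun u' => hseq f h β r (x, u')) u q
      + fderiv ℝ (fun x' => hseq f h β r (x', u)) x (f (x, u)) + γ * hseq f h β r (x, u)) = 0)
    (hbu : 0 ≤ b u)
    (hhr : 0 ≤ fderiv ℝ (fun x' => hseq f h β r (x', u)) x (f (x, u)) + γ * hseq f h β r (x, u))
    (hLip : ‖(ContinuousLinearMap.adjoint (fderiv ℝ w u)) (gradient Φ (w u) - gradient Φ x)‖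
      ≤ L * ‖x - w u‖)
    (W : EuclideanSpace ℝ (Fin n) × EuclideanSpace ℝ (Fin m) → ℝ) (hW : ContDiff ℝ 1 W)
    (hWx : fderiv ℝ (fun x' => W (x', u)) x (f (x, u)) ≤ -d₃ * ‖x - w u‖ ^ 2)
    (hWu : ‖fderiv ℝ (fun u' => W (x, u')) u‖ ≤ d₄ * ‖x - w u‖) :
    ⟪gradient Φ (w u), fderiv ℝ w u q⟫
      + fderiv ℝ (fun x' => W (x', u)) x (f (x, u))
      + fderiv ℝ (fun u' => W (x, u')) u q
      ≤ -(1 / ε) * ‖q‖ ^ 2 + (L + d₄) * ‖q‖ * ‖x - w u‖ - d₃ * ‖x - w u‖ ^ 2 ∧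
    (ε < 4 * d₃ / (L + d₄) ^ 2 →
      -(1 / ε) * ‖q‖ ^ 2 + (L + d₄) * ‖q‖ * ‖x - w u‖ - d₃ * ‖x - w u‖ ^ 2 ≤ 0 ∧
      (-(1 / ε) * ‖q‖ ^ 2 + (L + d₄) * ‖q‖ * ‖x - w u‖ - d₃ * ‖x - w u‖ ^ 2 = 0 →
        q = 0 ∧ x = w u)) :=
  lyapunov_decrease_estimate_general f h b β Φ w ε α γ hε hα d₃ d₄ L x u q lb lh hlb hlh hstat hcsb
    hcsh hbu hhr hLip W hWx hWu
end
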